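/- Let E be a vector lattice and S, T orthomorphisms of E whose supremum S ∨ T exists in the order bounded operators. Then (S ∨ T)(x) = S(x) ∨ T(x) and (S ∧ T)(x) = S(x) ∧ T(x) for every x ∈ E⁺. -/

import Mathlib

variable (E : Type*) [AddCommGroup E] [Lattice E] [Module ℝ E]
  [CovariantClass E E (· + ·) (· ≤ ·)] [PosSMulMono ℝ E]

/-- The order on order bounded operators: `A ≤ B` iff `A x ≤ B x` for all `x ≥ 0`. -/
def opLE (A B : E →ₗ[ℝ] E) : Prop := ∀ x : E, 0 ≤ x → A x ≤ B x

/-- An operator is order bounded when it maps order bounded sets to order bounded sets. -/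
def IsOrderBoundedOp (T : E →ₗ[ℝ] E) : Prop :=
  ∀ a b : E, ∃ c d : E, ∀ x : E, a ≤ x → x ≤ b → c ≤ T x ∧ T x ≤ d

/-- Band preserving: `T x` lies in the band generated by `x`; equivalently `T x ⊥ y`
whenever `x ⊥ y`. -/
def IsBandPreserving (T : E →ₗ[ℝ] E) : Prop :=
  ∀ x y : E, |x| ⊓ |y| = 0 → |T x| ⊓ |y| = 0

/-- An orthomorphism is an order bounded band preserving linear operator. -/
def IsOrthomorphism (T : E →ₗ[ℝ] E) : Prop :=
  IsOrderBoundedOp E T ∧ IsBandPreserving E T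

/-- Membership in the band generated by a set `S` (in an Archimedean vector lattice this is
the double disjoint complement of `S`). -/
def memBandGen (S : Set E) (w : E) : Prop :=
  ∀ u : E, (∀ s ∈ S, |u| ⊓ |s| = 0) → |u| ⊓ |w| = 0

/-- `P` is the band projection onto the band `B`: it maps into `B` and `x - P x` is
disjoint from `B` for every `x`. -/
def IsBandProjectionOnto (B : Set E) (P : E →ₗ[ℝ] E) : Prop :=
  (∀ x : E, P x ∈ B) ∧ (∀ x : E, ∀ b ∈ B, |x - P x| ⊓ |b| = 0)

/-- Order convergence of a net: there is a downward directed set `D` with infimum `0`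
such that the net is eventually dominated by every member of `D`. -/
def OrderConvNet {ι : Type*} [Preorder ι] (y : ι → E) (l : E) : Prop :=
  ∃ D : Set E, D.Nonempty ∧ DirectedOn (· ≥ ·) D ∧ IsGLB D 0 ∧
    ∀ d ∈ D, ∃ i₀ : ι, ∀ i : ι, i₀ ≤ i → |y i - l| ≤ d

/-- Unbounded order convergence of a net. -/
def UOConvNet {ι : Type*} [Preorder ι] (y : ι → E) (l : E) : Prop :=
  ∀ u : E, 0 ≤ u → OrderConvNet E (fun i => |y i - l| ⊓ u) 0

/-- Order convergence of a net of operators, in the operator order of the order bounded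
operators: there is a downward directed set `D` of operators whose infimum among the
order bounded operators is `0`, eventually dominating `|T i - L|`. -/
def OpOrderConvNet {ι : Type*} [Preorder ι] (T : ι → E →ₗ[ℝ] E) (L : E →ₗ[ℝ] E) : Prop :=
  ∃ D : Set (E →ₗ[ℝ] E), D.Nonempty ∧
    DirectedOn (fun A B => opLE E B A) D ∧
    (∀ d ∈ D, opLE E 0 d) ∧
    (∀ C : E →ₗ[ℝ] E, IsOrderBoundedOp E C → (∀ d ∈ D, opLE E C d) → opLE E C 0) ∧
    ∀ d ∈ D, ∃ i₀ : ι, ∀ i : ι, i₀ ≤ i → opLE E (L - T i) d ∧ opLE E (T i - L) d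


/-!
For an orthomorphism `V` the map `z ↦ (V z)⁺` is additive on the positive cone, so it extends to
an order bounded operator `W`. Then `T + W` and `S - W`, with `V = S - T`, are order bounded
operators that agree with `S x ⊔ T x` and `S x ⊓ T x` on `E⁺`; this pins down `S ∨ T` and `S ∧ T`
there.

Additivity comes down to the disjointness of `(V x)⁺` and `(V y)⁻` for `x, y ≥ 0`. When `y ≤ x`,
slice `y` into `m` horizontal layers of height `x / m`: band preservation makes the parts of
`(V x)⁺ ⊓ (V y)⁻` carried by different layers disjoint, each of them is at most `g / m` for a bound
`g` of `V` on `[0, x]`, and the Archimedean property leaves `0`. The general case reduces to this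
one by splitting `y = y ⊓ k • x + (y - k • x)⁺`.
-/

open Finset

lemma inf_eq_zero_of_le {α : Type*} [Lattice α] [Zero α] {a b a' b' : α} (ha : 0 ≤ a) (hb : 0 ≤ b)
    (haa' : a ≤ a') (hbb' : b ≤ b') (h : a' ⊓ b' = 0) : a ⊓ b = 0 :=
  le_antisymm (h ▸ inf_le_inf haa' hbb') (le_inf ha hb)

section LatticeOrderedGroup

variable {α : Type*} [AddCommGroup α] [Lattice α] [AddLeftMono α]

lemma inf_add_le_inf_add_inf {a b c : α} (ha : 0 ≤ a) (hb : 0 ≤ b) (hc : 0 ≤ c) :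
    c ⊓ (a + b) ≤ c ⊓ a + c ⊓ b := by
  rw [add_inf, inf_add, inf_add]
  refine le_inf (le_inf ?_ ?_) (le_inf ?_ inf_le_right) <;> refine inf_le_left.trans ?_
  · exact le_add_of_nonneg_left hc
  · exact le_add_of_nonneg_left ha
  · exact le_add_of_nonneg_right hb

lemma inf_sum_le_sum_inf {ι : Type*} {s : Finset ι} {f : ι → α} {c : α} (hc : 0 ≤ c)
    (hf : ∀ i ∈ s, 0 ≤ f i) : c ⊓ ∑ i ∈ s, f i ≤ ∑ i ∈ s, c ⊓ f i := by
  classical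
  induction s using Finset.induction_on with
  | empty => simp
  | insert a s ha ih =>
    rw [sum_insert ha, sum_insert ha]
    have hs : ∀ i ∈ s, 0 ≤ f i := fun i hi => hf i (mem_insert_of_mem hi)
    calc c ⊓ (f a + ∑ i ∈ s, f i) ≤ c ⊓ f a + c ⊓ ∑ i ∈ s, f i :=
          inf_add_le_inf_add_inf (hf a (mem_insert_self a s)) (sum_nonneg hs) hc
      _ ≤ c ⊓ f a + ∑ i ∈ s, c ⊓ f i := add_le_add_right (ih hs) _

lemma add_inf_eq_zero {a b c : α} (ha : 0 ≤ a) (hb : 0 ≤ b) (hc : 0 ≤ c) (hac : a ⊓ c = 0)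
    (hbc : b ⊓ c = 0) : (a + b) ⊓ c = 0 := by
  refine le_antisymm ?_ (le_inf (add_nonneg ha hb) hc)
  calc (a + b) ⊓ c = c ⊓ (a + b) := inf_comm _ _
    _ ≤ c ⊓ a + c ⊓ b := inf_add_le_inf_add_inf ha hb hc
    _ = 0 := by rw [inf_comm, hac, inf_comm, hbc, add_zero]

lemma add_inf_add_eq_zero {a b c d : α} (ha : 0 ≤ a) (hb : 0 ≤ b) (hc : 0 ≤ c) (hd : 0 ≤ d)
    (hac : a ⊓ c = 0) (had : a ⊓ d = 0) (hbc : b ⊓ c = 0) (hbd : b ⊓ d = 0) :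
    (a + b) ⊓ (c + d) = 0 := by
  have hcd : ∀ e, 0 ≤ e → e ⊓ c = 0 → e ⊓ d = 0 → e ⊓ (c + d) = 0 := fun e he hec hed => by
    rw [inf_comm]
    exact add_inf_eq_zero hc hd he (by rw [inf_comm, hec]) (by rw [inf_comm, hed])
  exact add_inf_eq_zero ha hb (add_nonneg hc hd) (hcd a ha hac had) (hcd b hb hbc hbd)

lemma le_of_le_add_of_inf_eq_zero {a b c : α} (ha : 0 ≤ a) (hb : 0 ≤ b) (hc : 0 ≤ c)
    (h : a ≤ b + c) (hac : a ⊓ c = 0) : a ≤ b :=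
  calc a = a ⊓ (b + c) := (inf_eq_left.2 h).symm
    _ ≤ a ⊓ b + a ⊓ c := inf_add_le_inf_add_inf hb hc ha
    _ = a ⊓ b := by rw [hac, add_zero]
    _ ≤ b := inf_le_right

lemma add_eq_sup_of_inf_eq_zero {a b : α} (h : a ⊓ b = 0) : a + b = a ⊔ b := by
  rw [← inf_add_sup, h, zero_add]

lemma sum_range_le_of_pairwise_inf_eq_zero {f : ℕ → α} {b : α} (hf : ∀ i, 0 ≤ f i)
    (hdisj : ∀ i j, i < j → f i ⊓ f j = 0) (hb : ∀ i, f i ≤ b) (n : ℕ) :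
    ∑ i ∈ range n, f i ≤ b := by
  induction n with
  | zero => simpa using (hf 0).trans (hb 0)
  | succ n ih =>
    have hn : (∑ i ∈ range n, f i) ⊓ f n = 0 := by
      refine le_antisymm ?_ (le_inf (sum_nonneg fun i _ => hf i) (hf n))
      calc (∑ i ∈ range n, f i) ⊓ f n ≤ ∑ i ∈ range n, f n ⊓ f i := by
            rw [inf_comm]; exact inf_sum_le_sum_inf (hf n) fun i _ => hf i
        _ = 0 := sum_eq_zero fun i hi => by rw [inf_comm, hdisj i n (mem_range.1 hi)]
    rw [sum_range_succ, add_eq_sup_of_inf_eq_zero hn]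
    exact sup_le ih (hb n)

lemma inf_add_posPart_sub (a b : α) : a ⊓ b + (a - b)⁺ = a := by
  rw [inf_eq_sub_posPart_sub, sub_add_cancel]

lemma inf_add_negPart_sub (a b : α) : a ⊓ b + (a - b)⁻ = b := by
  rw [← posPart_neg, neg_sub, inf_comm, inf_add_posPart_sub]

lemma posPart_sub_eq_self_of_inf_eq_zero {a b : α} (h : a ⊓ b = 0) : (a - b)⁺ = a := by
  simpa [h] using inf_add_posPart_sub a b

lemma posPart_le_abs (a : α) : a⁺ ≤ |a| := sup_le (le_abs_self a) (abs_nonneg a)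

lemma negPart_le_abs (a : α) : a⁻ ≤ |a| := sup_le (neg_le_abs a) (abs_nonneg a)

lemma posPart_add_le (a b : α) : (a + b)⁺ ≤ a⁺ + b⁺ :=
  sup_le (add_le_add (le_posPart a) (le_posPart b))
    (add_nonneg (posPart_nonneg a) (posPart_nonneg b))

lemma negPart_add_le (a b : α) : (a + b)⁻ ≤ a⁻ + b⁻ := by
  rw [← posPart_neg, neg_add, ← posPart_neg a, ← posPart_neg b]
  exact posPart_add_le (-a) (-b)

lemma negPart_sum_le {ι : Type*} (s : Finset ι) (f : ι → α) :
    (∑ i ∈ s, f i)⁻ ≤ ∑ i ∈ s, (f i)⁻ := by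
  rw [negPart_def, ← sum_neg_distrib]
  exact sup_le (sum_le_sum fun i _ => neg_le_negPart (f i))
    (sum_nonneg fun i _ => negPart_nonneg _)

end LatticeOrderedGroup

section LevelSlices

variable {α : Type*} [AddCommGroup α] [Lattice α]

def levelExcess (γ w : α) (j : ℕ) : α := (γ - j • w)⁺

/-- The horizontal slice of `γ` between heights `j • w` and `(j + 1) • w`. -/
def levelSlice (γ w : α) (j : ℕ) : α := levelExcess γ w j ⊓ w

variable {γ w : α}

lemma levelExcess_zero (hγ : 0 ≤ γ) : levelExcess γ w 0 = γ := by
  simp [levelExcess, hγ]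

lemma levelSlice_nonneg (hw : 0 ≤ w) (j : ℕ) : 0 ≤ levelSlice γ w j :=
  le_inf (posPart_nonneg _) hw

variable [AddLeftMono α]

lemma levelExcess_succ (hw : 0 ≤ w) (j : ℕ) :
    levelExcess γ w (j + 1) = (levelExcess γ w j - w)⁺ := by
  simp only [levelExcess, posPart_def, succ_nsmul, ← sub_sub, sup_sub, zero_sub, sup_assoc,
    sup_eq_right.2 (neg_nonpos.2 hw)]

lemma levelSlice_eq_sub (hw : 0 ≤ w) (j : ℕ) :
    levelSlice γ w j = levelExcess γ w j - levelExcess γ w (j + 1) := by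
  rw [levelSlice, levelExcess_succ hw, inf_eq_sub_posPart_sub]

lemma levelExcess_antitone (hw : 0 ≤ w) : Antitone (levelExcess γ w) := fun _ _ hij =>
  posPart_mono (sub_le_sub_left (nsmul_le_nsmul_left hw hij) γ)

lemma sum_levelSlice (hγ : 0 ≤ γ) (hw : 0 ≤ w) {m : ℕ} (hγm : γ ≤ m • w) :
    ∑ j ∈ range m, levelSlice γ w j = γ := by
  rw [sum_congr rfl fun j _ => levelSlice_eq_sub hw j, sum_range_sub', levelExcess_zero hγ,
    levelExcess, posPart_eq_zero.2 (sub_nonpos.2 hγm), sub_zero]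

lemma sub_levelSlice_inf_levelExcess_succ (hw : 0 ≤ w) (j : ℕ) :
    (w - levelSlice γ w j) ⊓ levelExcess γ w (j + 1) = 0 := by
  rw [levelSlice, inf_comm _ w, inf_eq_sub_posPart_sub w, sub_sub_cancel, levelExcess_succ hw,
    ← neg_sub w, posPart_neg]
  exact posPart_inf_negPart_eq_zero _

end LevelSlices

lemma eq_zero_of_forall_natCast_smul_le {M : Type*} [AddCommGroup M] [PartialOrder M]
    [Module ℝ M] (harch : ∀ x y : M, (∀ n : ℕ, n • x ≤ y) → x ≤ 0) {x y : M} (hx : 0 ≤ x)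
    (h : ∀ n : ℕ, 0 < n → (n : ℝ) • x ≤ y) : x = 0 := by
  refine le_antisymm (harch x y fun n => ?_) hx
  rcases n.eq_zero_or_pos with rfl | hn
  · simpa using hx.trans (by simpa using h 1 one_pos)
  · rw [← Nat.cast_smul_eq_nsmul ℝ]; exact h n hn

section VectorLattice

variable {M : Type*} [AddCommGroup M] [Lattice M] [Module ℝ M] [PosSMulMono ℝ M]

lemma posPart_smul_of_nonneg {r : ℝ} (hr : 0 ≤ r) (a : M) : (r • a)⁺ = r • a⁺ := by
  rcases hr.eq_or_lt with rfl | hr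
  · simp
  · have h := (OrderIso.smulRight (β := M) hr).map_sup a 0
    simp only [OrderIso.smulRight_apply, smul_zero] at h
    rw [posPart_def, posPart_def, h]

lemma negPart_smul_of_nonneg {r : ℝ} (hr : 0 ≤ r) (a : M) : (r • a)⁻ = r • a⁻ := by
  rw [← posPart_neg, ← smul_neg, posPart_smul_of_nonneg hr, posPart_neg]

variable [AddLeftMono M]

lemma smul_inf_eq_zero {r : ℝ} (hr : 0 ≤ r) {a b : M} (ha : 0 ≤ a) (hb : 0 ≤ b) (h : a ⊓ b = 0) :
    (r • a) ⊓ b = 0 := by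
  have hr1 : (0 : ℝ) < r + 1 := by linarith
  refine inf_eq_zero_of_le (smul_nonneg hr ha) hb (a' := (r + 1) • a) (b' := (r + 1) • b) ?_ ?_ ?_
  · rw [add_smul, one_smul]; exact le_add_of_nonneg_right ha
  · rw [add_smul, one_smul]; exact le_add_of_nonneg_left (smul_nonneg hr hb)
  · rw [← OrderIso.smulRight_apply hr1, ← OrderIso.smulRight_apply hr1, ← map_inf, h,
      OrderIso.smulRight_apply, smul_zero]

lemma exists_linearMap_eq_on_nonneg {N : Type*} [AddCommGroup N] [Module ℝ N] (F : M → N)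
    (hadd : ∀ a b, 0 ≤ a → 0 ≤ b → F (a + b) = F a + F b)
    (hsmul : ∀ c : ℝ, 0 ≤ c → ∀ z, 0 ≤ z → F (c • z) = c • F z) :
    ∃ U : M →ₗ[ℝ] N, ∀ z, 0 ≤ z → U z = F z := by
  have hF0 : F 0 = 0 := by simpa using hadd 0 0 le_rfl le_rfl
  have hsub : ∀ a b, 0 ≤ a → 0 ≤ b → F (a - b)⁺ - F (a - b)⁻ = F a - F b := by
    intro a b ha hb
    have hab := posPart_sub_negPart (a - b)
    rw [sub_eq_sub_iff_add_eq_add] at hab ⊢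
    rw [← hadd _ _ (posPart_nonneg _) hb, ← hadd _ _ ha (negPart_nonneg _), hab]
  refine ⟨{ toFun := fun z => F z⁺ - F z⁻, map_add' := ?_, map_smul' := ?_ }, fun z hz => ?_⟩
  · intro x y
    have hxy : x + y = (x⁺ + y⁺) - (x⁻ + y⁻) := by
      conv_lhs => rw [← posPart_sub_negPart x, ← posPart_sub_negPart y]
      abel
    rw [hxy, hsub _ _ (add_nonneg (posPart_nonneg x) (posPart_nonneg y))
      (add_nonneg (negPart_nonneg x) (negPart_nonneg y)), hadd _ _ (posPart_nonneg x)
      (posPart_nonneg y), hadd _ _ (negPart_nonneg x) (negPart_nonneg y)]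
    abel
  · intro c x
    simp only [RingHom.id_apply]
    rcases le_or_gt 0 c with hc | hc
    · have hcx : c • x = c • x⁺ - c • x⁻ := by rw [← smul_sub, posPart_sub_negPart]
      rw [hcx, hsub _ _ (smul_nonneg hc (posPart_nonneg x)) (smul_nonneg hc (negPart_nonneg x)),
        hsmul c hc _ (posPart_nonneg x), hsmul c hc _ (negPart_nonneg x), smul_sub]
    · have hc' : 0 ≤ -c := by linarith
      have hcx : c • x = (-c) • x⁻ - (-c) • x⁺ := by
        rw [← smul_sub, neg_smul, ← smul_neg, neg_sub, posPart_sub_negPart]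
      rw [hcx, hsub _ _ (smul_nonneg hc' (negPart_nonneg x)) (smul_nonneg hc' (posPart_nonneg x)),
        hsmul _ hc' _ (negPart_nonneg x), hsmul _ hc' _ (posPart_nonneg x), neg_smul, neg_smul,
        smul_sub]
      abel
  · show F z⁺ - F z⁻ = F z
    rw [posPart_eq_self.2 hz, negPart_eq_zero.2 hz, hF0, sub_zero]

end VectorLattice

section Operators

variable {E : Type*} [AddCommGroup E] [Lattice E] [Module ℝ E] [AddLeftMono E]

lemma IsOrderBoundedOp.add {A B : E →ₗ[ℝ] E} (hA : IsOrderBoundedOp E A)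
    (hB : IsOrderBoundedOp E B) : IsOrderBoundedOp E (A + B) := fun a b => by
  obtain ⟨c₁, d₁, h₁⟩ := hA a b
  obtain ⟨c₂, d₂, h₂⟩ := hB a b
  exact ⟨c₁ + c₂, d₁ + d₂, fun z ha hb =>
    ⟨add_le_add (h₁ z ha hb).1 (h₂ z ha hb).1, add_le_add (h₁ z ha hb).2 (h₂ z ha hb).2⟩⟩

lemma IsOrderBoundedOp.sub {A B : E →ₗ[ℝ] E} (hA : IsOrderBoundedOp E A)
    (hB : IsOrderBoundedOp E B) : IsOrderBoundedOp E (A - B) := fun a b => by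
  obtain ⟨c₁, d₁, h₁⟩ := hA a b
  obtain ⟨c₂, d₂, h₂⟩ := hB a b
  exact ⟨c₁ - d₂, d₁ - c₂, fun z ha hb =>
    ⟨sub_le_sub (h₁ z ha hb).1 (h₂ z ha hb).2, sub_le_sub (h₁ z ha hb).2 (h₂ z ha hb).1⟩⟩

lemma IsOrderBoundedOp.exists_abs_le {V : E →ₗ[ℝ] E} (hV : IsOrderBoundedOp E V) (y : E) :
    ∃ g, ∀ z, 0 ≤ z → z ≤ y → |V z| ≤ g := by
  obtain ⟨c, d, h⟩ := hV 0 y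
  exact ⟨d ⊔ -c, fun z hz hzy =>
    abs_le'.2 ⟨(h z hz hzy).2.trans le_sup_left,
      (neg_le_neg_iff.2 (h z hz hzy).1).trans le_sup_right⟩⟩

lemma IsBandPreserving.sub {A B : E →ₗ[ℝ] E} (hA : IsBandPreserving E A)
    (hB : IsBandPreserving E B) : IsBandPreserving E (A - B) := fun a b h => by
  have hAB : |(A - B) a| ≤ |A a| + |B a| := by
    rw [LinearMap.sub_apply, sub_eq_add_neg, ← abs_neg (B a)]
    exact abs_add_le _ _
  exact inf_eq_zero_of_le (abs_nonneg _) (abs_nonneg _) hAB le_rfl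
    (add_inf_eq_zero (abs_nonneg _) (abs_nonneg _) (abs_nonneg _) (hA a b h) (hB a b h))

lemma IsBandPreserving.abs_map_inf_abs_map_eq_zero {V : E →ₗ[ℝ] E} (hV : IsBandPreserving E V)
    {a b : E} (ha : 0 ≤ a) (hb : 0 ≤ b) (h : a ⊓ b = 0) : |V a| ⊓ |V b| = 0 := by
  have hVa : |V a| ⊓ |b| = 0 := hV a b (by rwa [abs_of_nonneg ha, abs_of_nonneg hb])
  rw [inf_comm]
  exact hV b (V a) (by rw [inf_comm]; exact hVa)

lemma inf_negPart_map_le_abs_map_sub (V : E →ₗ[ℝ] E) {q w : E} (hq : 0 ≤ q)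
    (hqw : q ⊓ (V w)⁻ = 0) (e : E) : q ⊓ (V e)⁻ ≤ |V (w - e)| := by
  have he : (V e)⁻ ≤ (V w)⁻ + (V (w - e))⁺ :=
    calc (V e)⁻ = (V w + -V (w - e))⁻ := by rw [map_sub, neg_sub, add_sub_cancel]
      _ ≤ (V w)⁻ + (V (w - e))⁺ := by rw [← negPart_neg (V (w - e))]; exact negPart_add_le _ _
  calc q ⊓ (V e)⁻ ≤ q ⊓ ((V w)⁻ + (V (w - e))⁺) := inf_le_inf_left q he
    _ ≤ q ⊓ (V w)⁻ + q ⊓ (V (w - e))⁺ :=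
        inf_add_le_inf_add_inf (negPart_nonneg _) (posPart_nonneg _) hq
    _ = q ⊓ (V (w - e))⁺ := by rw [hqw, zero_add]
    _ ≤ |V (w - e)| := inf_le_right.trans (posPart_le_abs _)

lemma le_sum_inf_negPart_map_levelSlice (V : E →ₗ[ℝ] E) {q γ w : E} (hq : 0 ≤ q)
    (hqγ : q ≤ (V γ)⁻) (hγ : 0 ≤ γ) (hw : 0 ≤ w) {m : ℕ} (hγm : γ ≤ m • w) :
    q ≤ ∑ j ∈ range m, q ⊓ (V (levelSlice γ w j))⁻ :=
  calc q = q ⊓ (V γ)⁻ := (inf_eq_left.2 hqγ).symm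
    _ ≤ q ⊓ ∑ j ∈ range m, (V (levelSlice γ w j))⁻ := by
        refine inf_le_inf_left q ?_
        conv_lhs => rw [← sum_levelSlice hγ hw hγm, map_sum]
        exact negPart_sum_le _ _
    _ ≤ ∑ j ∈ range m, q ⊓ (V (levelSlice γ w j))⁻ :=
        inf_sum_le_sum_inf hq fun j _ => negPart_nonneg _

/-- For the `i`-th slice `e`, `q ⊓ (V e)⁻` lies below `|V (w - e)|`, and `w - e` is disjoint from
all higher slices. -/
lemma IsBandPreserving.inf_negPart_map_levelSlice_inf_eq_zero {V : E →ₗ[ℝ] E}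
    (hV : IsBandPreserving E V) {q γ w : E} (hq : 0 ≤ q) (hw : 0 ≤ w) (hqw : q ⊓ (V w)⁻ = 0)
    {i j : ℕ} (hij : i < j) :
    (q ⊓ (V (levelSlice γ w i))⁻) ⊓ (q ⊓ (V (levelSlice γ w j))⁻) = 0 := by
  have hslices : (w - levelSlice γ w i) ⊓ levelSlice γ w j = 0 :=
    inf_eq_zero_of_le (sub_nonneg.2 inf_le_right) (levelSlice_nonneg hw j) le_rfl
      (inf_le_left.trans (levelExcess_antitone hw hij)) (sub_levelSlice_inf_levelExcess_succ hw i)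
  exact inf_eq_zero_of_le (le_inf hq (negPart_nonneg _)) (le_inf hq (negPart_nonneg _))
    (inf_negPart_map_le_abs_map_sub V hq hqw _) (inf_le_right.trans (negPart_le_abs _))
    (hV.abs_map_inf_abs_map_eq_zero (sub_nonneg.2 inf_le_right) (levelSlice_nonneg hw j) hslices)

lemma IsOrthomorphism.sub {A B : E →ₗ[ℝ] E} (hA : IsOrthomorphism E A)
    (hB : IsOrthomorphism E B) : IsOrthomorphism E (A - B) :=
  ⟨hA.1.sub hB.1, hA.2.sub hB.2⟩

end Operators

namespace IsOrthomorphism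

variable {E : Type*} [AddCommGroup E] [Lattice E] [Module ℝ E] [AddLeftMono E] [PosSMulMono ℝ E]
  {V : E →ₗ[ℝ] E}

lemma posPart_map_inf_negPart_map_eq_zero_of_le (hV : IsOrthomorphism E V)
    (harch : ∀ x y : E, (∀ n : ℕ, n • x ≤ y) → x ≤ 0) {γ δ : E} (hγ : 0 ≤ γ) (hγδ : γ ≤ δ) :
    (V δ)⁺ ⊓ (V γ)⁻ = 0 := by
  obtain ⟨g, hg⟩ := hV.1.exists_abs_le δ
  have hq : 0 ≤ (V δ)⁺ ⊓ (V γ)⁻ := le_inf (posPart_nonneg _) (negPart_nonneg _)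
  refine eq_zero_of_forall_natCast_smul_le harch (y := g) hq fun m hm => ?_
  set q := (V δ)⁺ ⊓ (V γ)⁻
  have hm' : (0 : ℝ) < m := Nat.cast_pos.2 hm
  set w := (m : ℝ)⁻¹ • δ
  have hw : 0 ≤ w := smul_nonneg (inv_nonneg.2 hm'.le) (hγ.trans hγδ)
  have hmw : (m : ℝ) • w = δ := smul_inv_smul₀ hm'.ne' δ
  have hγm : γ ≤ m • w := by rwa [← Nat.cast_smul_eq_nsmul ℝ, hmw]
  -- `(V δ)⁺ = m • (V w)⁺` is disjoint from `(V w)⁻`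
  have hqw : q ⊓ (V w)⁻ = 0 := by
    refine inf_eq_zero_of_le hq (negPart_nonneg _) inf_le_left le_rfl ?_
    rw [← hmw, map_smul, posPart_smul_of_nonneg hm'.le]
    exact smul_inf_eq_zero hm'.le (posPart_nonneg _) (negPart_nonneg _)
      (posPart_inf_negPart_eq_zero _)
  have hslice : ∀ j, q ⊓ (V (levelSlice γ w j))⁻ ≤ (m : ℝ)⁻¹ • g := fun j => by
    have hmj : (m : ℝ) • levelSlice γ w j ≤ δ :=
      hmw ▸ smul_le_smul_of_nonneg_left inf_le_right hm'.le
    rw [le_inv_smul_iff_of_pos hm']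
    calc (m : ℝ) • (q ⊓ (V (levelSlice γ w j))⁻) ≤ (m : ℝ) • (V (levelSlice γ w j))⁻ :=
          smul_le_smul_of_nonneg_left inf_le_right hm'.le
      _ = (V ((m : ℝ) • levelSlice γ w j))⁻ := by
          rw [map_smul, negPart_smul_of_nonneg hm'.le]
      _ ≤ g := (negPart_le_abs _).trans
          (hg _ (smul_nonneg hm'.le (levelSlice_nonneg hw j)) hmj)
  calc (m : ℝ) • q ≤ (m : ℝ) • ∑ j ∈ range m, q ⊓ (V (levelSlice γ w j))⁻ :=
        smul_le_smul_of_nonneg_left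
          (le_sum_inf_negPart_map_levelSlice V hq inf_le_right hγ hw hγm) hm'.le
    _ ≤ (m : ℝ) • ((m : ℝ)⁻¹ • g) := smul_le_smul_of_nonneg_left
        (sum_range_le_of_pairwise_inf_eq_zero (fun j => le_inf hq (negPart_nonneg _))
          (fun _ _ hij => hV.2.inf_negPart_map_levelSlice_inf_eq_zero hq hw hqw hij) hslice m)
        hm'.le
    _ = g := smul_inv_smul₀ hm'.ne' g

lemma posPart_map_inf_negPart_map_eq_zero (hV : IsOrthomorphism E V)
    (harch : ∀ x y : E, (∀ n : ℕ, n • x ≤ y) → x ≤ 0) {x y : E} (hx : 0 ≤ x) (hy : 0 ≤ y) :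
    (V x)⁺ ⊓ (V y)⁻ = 0 := by
  obtain ⟨g, hg⟩ := hV.1.exists_abs_le y
  have hp : 0 ≤ (V x)⁺ ⊓ (V y)⁻ := le_inf (posPart_nonneg _) (negPart_nonneg _)
  refine eq_zero_of_forall_natCast_smul_le harch (y := g) hp fun k hk => ?_
  set p := (V x)⁺ ⊓ (V y)⁻
  have hk' : (0 : ℝ) < k := Nat.cast_pos.2 hk
  have hy_eq := inf_add_posPart_sub y ((k : ℝ) • x)
  have hkx_eq := inf_add_negPart_sub y ((k : ℝ) • x)
  set a := y - (k : ℝ) • x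
  set c := y ⊓ (k : ℝ) • x
  have hc : 0 ≤ c := le_inf hy (smul_nonneg hk'.le hx)
  have hpc : p ⊓ (V c)⁻ = 0 := by
    have h := hV.posPart_map_inf_negPart_map_eq_zero_of_le harch hc inf_le_right
    rw [map_smul, posPart_smul_of_nonneg hk'.le] at h
    have h' := smul_inf_eq_zero (inv_nonneg.2 hk'.le) (smul_nonneg hk'.le (posPart_nonneg _))
      (negPart_nonneg _) h
    rw [inv_smul_smul₀ hk'.ne'] at h'
    exact inf_eq_zero_of_le hp (negPart_nonneg _) inf_le_left le_rfl h'
  have hpa : p ≤ |V a⁺| := by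
    refine (le_of_le_add_of_inf_eq_zero hp (negPart_nonneg _) (negPart_nonneg _) ?_ hpc).trans
      (negPart_le_abs _)
    calc p ≤ (V (c + a⁺))⁻ := hy_eq ▸ inf_le_right
      _ ≤ (V a⁺)⁻ + (V c)⁻ := by rw [map_add, add_comm]; exact negPart_add_le _ _
  -- `V` maps the disjoint `a⁺` and `a⁻` to disjoint elements
  have hkpa : ((k : ℝ) • p) ⊓ (V a⁻)⁺ = 0 :=
    inf_eq_zero_of_le (smul_nonneg hk'.le hp) (posPart_nonneg _) le_rfl (posPart_le_abs _)
      (smul_inf_eq_zero hk'.le hp (abs_nonneg _) (inf_eq_zero_of_le hp (abs_nonneg _) hpa le_rfl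
        (hV.2.abs_map_inf_abs_map_eq_zero (posPart_nonneg a) (negPart_nonneg a)
          (posPart_inf_negPart_eq_zero a))))
  have hkp : (k : ℝ) • p ≤ (V c)⁺ + (V a⁻)⁺ :=
    calc (k : ℝ) • p ≤ (k : ℝ) • (V x)⁺ := smul_le_smul_of_nonneg_left inf_le_left hk'.le
      _ = (V (c + a⁻))⁺ := by rw [hkx_eq, map_smul, posPart_smul_of_nonneg hk'.le]
      _ ≤ (V c)⁺ + (V a⁻)⁺ := by rw [map_add]; exact posPart_add_le _ _
  calc (k : ℝ) • p ≤ (V c)⁺ :=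
        le_of_le_add_of_inf_eq_zero (smul_nonneg hk'.le hp) (posPart_nonneg _) (posPart_nonneg _)
          hkp hkpa
    _ ≤ g := (posPart_le_abs _).trans (hg c hc inf_le_left)

lemma posPart_map_add (hV : IsOrthomorphism E V)
    (harch : ∀ x y : E, (∀ n : ℕ, n • x ≤ y) → x ≤ 0) {x y : E} (hx : 0 ≤ x) (hy : 0 ≤ y) :
    (V (x + y))⁺ = (V x)⁺ + (V y)⁺ := by
  have hsplit : V (x + y) = ((V x)⁺ + (V y)⁺) - ((V x)⁻ + (V y)⁻) := by
    rw [map_add, add_sub_add_comm, posPart_sub_negPart, posPart_sub_negPart]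
  rw [hsplit]
  exact posPart_sub_eq_self_of_inf_eq_zero <| add_inf_add_eq_zero (posPart_nonneg _)
    (posPart_nonneg _) (negPart_nonneg _) (negPart_nonneg _) (posPart_inf_negPart_eq_zero _)
    (hV.posPart_map_inf_negPart_map_eq_zero harch hx hy)
    (hV.posPart_map_inf_negPart_map_eq_zero harch hy hx) (posPart_inf_negPart_eq_zero _)

lemma exists_posPart (hV : IsOrthomorphism E V)
    (harch : ∀ x y : E, (∀ n : ℕ, n • x ≤ y) → x ≤ 0) :
    ∃ W : E →ₗ[ℝ] E, IsOrderBoundedOp E W ∧ ∀ z, 0 ≤ z → W z = (V z)⁺ := by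
  obtain ⟨W, hW⟩ := exists_linearMap_eq_on_nonneg (fun z => (V z)⁺)
    (fun _ _ ha hb => hV.posPart_map_add harch ha hb)
    (fun c hc z _ => by rw [map_smul, posPart_smul_of_nonneg hc])
  refine ⟨W, fun a b => ?_, hW⟩
  obtain ⟨ga, hga⟩ := hV.1.exists_abs_le a⁻
  obtain ⟨gb, hgb⟩ := hV.1.exists_abs_le b⁺
  refine ⟨-ga, gb, fun z haz hzb => ?_⟩
  have hWz : W z = (V z⁺)⁺ - (V z⁻)⁺ := by
    rw [← hW _ (posPart_nonneg z), ← hW _ (negPart_nonneg z), ← map_sub, posPart_sub_negPart]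
  have hneg : (V z⁻)⁺ ≤ ga :=
    (posPart_le_abs _).trans (hga _ (negPart_nonneg z) (negPart_anti haz))
  have hpos : (V z⁺)⁺ ≤ gb :=
    (posPart_le_abs _).trans (hgb _ (posPart_nonneg z) (posPart_mono hzb))
  rw [hWz]
  exact ⟨by simpa using sub_le_sub (posPart_nonneg _) hneg,
    (sub_le_self _ (posPart_nonneg _)).trans hpos⟩

end IsOrthomorphism

theorem stmt5
    (harch : ∀ x y : E, (∀ n : ℕ, n • x ≤ y) → x ≤ 0)
    (S T R R' : E →ₗ[ℝ] E)
    (hS : IsOrthomorphism E S) (hT : IsOrthomorphism E T)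
    (hRub : opLE E S R ∧ opLE E T R)
    (hRlub : ∀ U : E →ₗ[ℝ] E, IsOrderBoundedOp E U → opLE E S U → opLE E T U → opLE E R U)
    (hR'lb : opLE E R' S ∧ opLE E R' T)
    (hR'glb : ∀ U : E →ₗ[ℝ] E, IsOrderBoundedOp E U → opLE E U S → opLE E U T → opLE E U R') :
    ∀ x : E, 0 ≤ x → R x = S x ⊔ T x ∧ R' x = S x ⊓ T x := by
  obtain ⟨W, hWob, hW⟩ := (hS.sub hT).exists_posPart harch
  have hsup : ∀ z, 0 ≤ z → (T + W) z = S z ⊔ T z := fun z hz => by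
    rw [LinearMap.add_apply, hW z hz, LinearMap.sub_apply, sup_eq_add_posPart_sub]
  have hinf : ∀ z, 0 ≤ z → (S - W) z = S z ⊓ T z := fun z hz => by
    rw [LinearMap.sub_apply, hW z hz, LinearMap.sub_apply, inf_eq_sub_posPart_sub]
  have hRle := hRlub _ (hT.1.add hWob) (fun z hz => hsup z hz ▸ le_sup_left)
    (fun z hz => hsup z hz ▸ le_sup_right)
  have hR'ge := hR'glb _ (hS.1.sub hWob) (fun z hz => hinf z hz ▸ inf_le_left)
    (fun z hz => hinf z hz ▸ inf_le_right)
  exact fun x hx =>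
    ⟨le_antisymm (hsup x hx ▸ hRle x hx) (sup_le (hRub.1 x hx) (hRub.2 x hx)),
      le_antisymm (le_inf (hR'lb.1 x hx) (hR'lb.2 x hx)) (hinf x hx ▸ hR'ge x hx)⟩
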